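/- For every integer d ≥ 0, the Euler characteristic of every d-sphere equals 1 + (−1)^d. -/

import Mathlib

/-!
Sorting the simplices of `G` by whether they contain a vertex `x` gives
`χ(G) = χ(G - x) + 1 - χ(S(x))`: the simplices through `x` are `{x}` and the cones
`insert x t` over the simplices `t` of `S(x)`, and coning flips the sign. Hence contractible
graphs have `χ = 1`, and for a `d`-sphere with a contractible punctured graph `G - x`,
induction on `d` gives `χ(G) = 1 + 1 - (1 + (-1)^(d-1)) = 1 + (-1)^d`, starting from
`χ(∅) = 0` for the `(-1)`-sphere.
-/

attribute [local instance] Classical.propDecidable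

noncomputable section

/-- A finite simple graph on a vertex type `V`: a finite vertex set together with a
symmetric, irreflexive adjacency relation supported on the vertex set. -/
structure FSGraph (V : Type) where
  verts : Finset V
  Adj : V → V → Prop
  symm : ∀ {a b}, Adj a b → Adj b a
  loopless : ∀ a, ¬ Adj a a
  supp : ∀ {a b}, Adj a b → a ∈ verts ∧ b ∈ verts

namespace FSGraph

variable {V : Type}

/-- The subgraph induced by the set of vertices satisfying `P`. -/
def induce (G : FSGraph V) (P : V → Prop) : FSGraph V where
  verts := G.verts.filter P
  Adj a b := G.Adj a b ∧ P a ∧ P b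
  symm h := ⟨G.symm h.1, h.2.2, h.2.1⟩
  loopless a h := G.loopless a h.1
  supp h := ⟨Finset.mem_filter.mpr ⟨(G.supp h.1).1, h.2.1⟩,
             Finset.mem_filter.mpr ⟨(G.supp h.1).2, h.2.2⟩⟩

/-- The unit sphere `S(x)`: the subgraph induced by the neighbours of `x`. -/
def sphere (G : FSGraph V) (x : V) : FSGraph V := G.induce (fun y => G.Adj x y)

/-- `G - x`: the subgraph induced by all vertices different from `x`. -/
def remove (G : FSGraph V) (x : V) : FSGraph V := G.induce (fun y => y ≠ x)

/-- Contractibility (in the sense of Evako/Knill): the one-point graph `K₁` is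
contractible, and a graph is contractible if some vertex `x` has both `S(x)` and
`G - x` contractible.  The empty graph is not contractible. -/
inductive Contractible : FSGraph V → Prop
  | single (G : FSGraph V) (x : V) (h : G.verts = {x}) : Contractible G
  | step (G : FSGraph V) (x : V) (hx : x ∈ G.verts)
      (hS : Contractible (G.sphere x)) (hR : Contractible (G.remove x)) :
      Contractible G

/-- `IsSphere d G`: `G` is a `d`-sphere.  The empty graph is the `(-1)`-sphere; for
`d ≥ 0`, a `d`-sphere is a nonempty graph all of whose unit spheres are
`(d-1)`-spheres (i.e. a `d`-graph) which becomes contractible after removing some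
vertex. -/
inductive IsSphere : ℤ → FSGraph V → Prop
  | empty (G : FSGraph V) (h : G.verts = ∅) : IsSphere (-1) G
  | succ (d : ℤ) (G : FSGraph V) (hd : 0 ≤ d) (hne : G.verts.Nonempty)
      (hunit : ∀ x ∈ G.verts, IsSphere (d - 1) (G.sphere x))
      (hpunct : ∃ x ∈ G.verts, Contractible (G.remove x)) :
      IsSphere d G

/-- A `d`-graph: a nonempty graph all of whose unit spheres are `(d-1)`-spheres. -/
def IsDGraph (d : ℤ) (G : FSGraph V) : Prop :=
  G.verts.Nonempty ∧ ∀ x ∈ G.verts, IsSphere (d - 1) (G.sphere x)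

/-- A `d`-ball: a graph of the form `G - x` with `G` a `d`-sphere and `x` a vertex. -/
def IsBall (d : ℤ) (B : FSGraph V) : Prop :=
  ∃ (G : FSGraph V) (x : V), IsSphere d G ∧ x ∈ G.verts ∧ B = G.remove x

/-- `f` is locally injective (a coloring): adjacent vertices get different values. -/
def LocallyInjective (G : FSGraph V) (f : V → ℝ) : Prop :=
  ∀ a b, G.Adj a b → f a ≠ f b

/-- `S_f^-(x)`: the subgraph of `S(x)` induced by `{y ∈ S(x) : f y < f x}`. -/
def subSphere (G : FSGraph V) (f : V → ℝ) (x : V) : FSGraph V :=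
  (G.sphere x).induce (fun y => f y < f x)

/-- `S_f^+(x)`: the subgraph of `S(x)` induced by `{y ∈ S(x) : f y > f x}`. -/
def supSphere (G : FSGraph V) (f : V → ℝ) (x : V) : FSGraph V :=
  (G.sphere x).induce (fun y => f x < f y)

/-- `x` is a critical point of `f` if at least one of `S_f^-(x)`, `S_f^+(x)` is
not contractible. -/
def IsCritical (G : FSGraph V) (f : V → ℝ) (x : V) : Prop :=
  ¬ Contractible (G.subSphere f x) ∨ ¬ Contractible (G.supSphere f x)

/-- `f` has exactly two critical points on the vertex set of `G`. -/
def ExactlyTwoCriticalPoints (G : FSGraph V) (f : V → ℝ) : Prop :=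
  ∃ a b, a ∈ G.verts ∧ b ∈ G.verts ∧ a ≠ b ∧
    G.IsCritical f a ∧ G.IsCritical f b ∧
    ∀ x ∈ G.verts, G.IsCritical f x → x = a ∨ x = b

/-- A simplex of `G`: a nonempty complete subgraph, given by its vertex set. -/
def IsSimplex (G : FSGraph V) (s : Finset V) : Prop :=
  s.Nonempty ∧ s ⊆ G.verts ∧ ∀ a ∈ s, ∀ b ∈ s, a ≠ b → G.Adj a b

/-- The finite set of simplices (nonempty complete subgraphs) of `G`. -/
def simplices (G : FSGraph V) : Finset (Finset V) :=
  G.verts.powerset.filter (fun s => G.IsSimplex s)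

/-- The Barycentric refinement `G'`: vertices are the simplices of `G`, two simplices
being adjacent when one is a proper subset of the other. -/
def barycentric (G : FSGraph V) : FSGraph (Finset V) where
  verts := G.simplices
  Adj s t := G.IsSimplex s ∧ G.IsSimplex t ∧ (s ⊂ t ∨ t ⊂ s)
  symm h := ⟨h.2.1, h.1, h.2.2.symm⟩
  loopless s h := by
    rcases h.2.2 with h' | h' <;> exact ssubset_irrefl s h'
  supp {s t} h :=
    ⟨Finset.mem_filter.mpr ⟨Finset.mem_powerset.mpr h.1.2.1, h.1⟩,
     Finset.mem_filter.mpr ⟨Finset.mem_powerset.mpr h.2.1.2.1, h.2.1⟩⟩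

/-- The level surface `{f = c}` in the Barycentric refinement `G'`: the subgraph of
`G'` induced by the simplices on which `f - c` takes both positive and negative
values. -/
def levelSurface (G : FSGraph V) (f : V → ℝ) (c : ℝ) : FSGraph (Finset V) :=
  G.barycentric.induce (fun s => (∃ a ∈ s, f a < c) ∧ (∃ b ∈ s, c < f b))

/-- `{f ≤ c}` in `G'`: the subgraph of `G'` induced by the simplices on which `f < c`
everywhere, together with those on which `f - c` takes both signs. -/
def subLevel (G : FSGraph V) (f : V → ℝ) (c : ℝ) : FSGraph (Finset V) :=
  G.barycentric.induce
    (fun s => (∀ a ∈ s, f a < c) ∨ ((∃ a ∈ s, f a < c) ∧ (∃ b ∈ s, c < f b)))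

/-- `{f ≥ c}` in `G'`: the subgraph of `G'` induced by the simplices on which `f > c`
everywhere, together with those on which `f - c` takes both signs. -/
def supLevel (G : FSGraph V) (f : V → ℝ) (c : ℝ) : FSGraph (Finset V) :=
  G.barycentric.induce
    (fun s => (∀ a ∈ s, c < f a) ∨ ((∃ a ∈ s, f a < c) ∧ (∃ b ∈ s, c < f b)))

/-- The center manifold `B_f(x) = {f = f x}` inside the Barycentric refinement
`S(x)'` of the unit sphere `S(x)`. -/
def centerManifold (G : FSGraph V) (f : V → ℝ) (x : V) : FSGraph (Finset V) :=
  (G.sphere x).levelSurface f (f x)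

/-- Euler characteristic: `χ(G) = Σ_k (-1)^k c_k(G)` where `c_k(G)` counts the
complete subgraphs with `k+1` vertices; equivalently the sum of `(-1)^(|s|-1)` over
all simplices `s`. -/
def euler (G : FSGraph V) : ℤ :=
  ∑ s ∈ G.simplices, (-1 : ℤ) ^ (s.card - 1)

lemma mem_simplices {G : FSGraph V} {s : Finset V} : s ∈ G.simplices ↔ G.IsSimplex s := by
  simp only [simplices, Finset.mem_filter, Finset.mem_powerset, and_iff_right_iff_imp]
  exact fun h => h.2.1

lemma mem_sphere_verts {G : FSGraph V} {x a : V} :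
    a ∈ (G.sphere x).verts ↔ a ∈ G.verts ∧ G.Adj x a :=
  Finset.mem_filter

lemma mem_remove_verts {G : FSGraph V} {x a : V} :
    a ∈ (G.remove x).verts ↔ a ∈ G.verts ∧ a ≠ x := by
  simp [remove, induce]

lemma isSimplex_singleton {G : FSGraph V} {x : V} (hx : x ∈ G.verts) : G.IsSimplex {x} :=
  ⟨Finset.singleton_nonempty x, Finset.singleton_subset_iff.mpr hx, by simp⟩

lemma isSimplex_remove {G : FSGraph V} {x : V} {s : Finset V} :
    (G.remove x).IsSimplex s ↔ G.IsSimplex s ∧ x ∉ s := by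
  constructor
  · rintro ⟨hne, hsub, hadj⟩
    refine ⟨⟨hne, fun a ha => (mem_remove_verts.mp (hsub ha)).1,
      fun a ha b hb hab => (hadj a ha b hb hab).1⟩, fun hxs => ?_⟩
    exact (mem_remove_verts.mp (hsub hxs)).2 rfl
  · rintro ⟨⟨hne, hsub, hadj⟩, hxs⟩
    have hne_x : ∀ a ∈ s, a ≠ x := fun a ha hax => hxs (hax ▸ ha)
    exact ⟨hne, fun a ha => mem_remove_verts.mpr ⟨hsub ha, hne_x a ha⟩,
      fun a ha b hb hab => ⟨hadj a ha b hb hab, hne_x a ha, hne_x b hb⟩⟩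

lemma simplices_remove (G : FSGraph V) (x : V) :
    (G.remove x).simplices = G.simplices.filter (x ∉ ·) := by
  ext s
  simp only [mem_simplices, Finset.mem_filter, isSimplex_remove]

lemma isSimplex_sphere {G : FSGraph V} {x : V} {t : Finset V} :
    (G.sphere x).IsSimplex t ↔ t.Nonempty ∧ x ∉ t ∧ G.IsSimplex (insert x t) := by
  constructor
  · rintro ⟨⟨a, ha⟩, hsub, hadj⟩
    have hnbr : ∀ b ∈ t, b ∈ G.verts ∧ G.Adj x b := fun b hb => mem_sphere_verts.mp (hsub hb)
    have hxt : x ∉ t := fun hxt => G.loopless x (hnbr x hxt).2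
    refine ⟨⟨a, ha⟩, hxt, Finset.insert_nonempty x t,
      Finset.insert_subset (G.supp (hnbr a ha).2).1 fun b hb => (hnbr b hb).1, ?_⟩
    simp only [Finset.mem_insert, forall_eq_or_imp]
    refine ⟨⟨fun h => absurd rfl h, fun b hb _ => (hnbr b hb).2⟩,
      fun b hb => ⟨fun _ => G.symm (hnbr b hb).2, fun c hc hbc => (hadj b hb c hc hbc).1⟩⟩
  · rintro ⟨hne, hxt, -, hsub, hadj⟩
    have hnbr : ∀ b ∈ t, G.Adj x b := fun b hb =>
      hadj x (Finset.mem_insert_self x t) b (Finset.mem_insert_of_mem hb)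
        fun hxb => hxt (hxb ▸ hb)
    refine ⟨hne, fun b hb => mem_sphere_verts.mpr
      ⟨hsub (Finset.mem_insert_of_mem hb), hnbr b hb⟩, fun b hb c hc hbc => ?_⟩
    exact ⟨hadj b (Finset.mem_insert_of_mem hb) c (Finset.mem_insert_of_mem hc) hbc,
      hnbr b hb, hnbr c hc⟩

lemma simplices_filter_mem {G : FSGraph V} {x : V} (hx : x ∈ G.verts) :
    G.simplices.filter (x ∈ ·) = insert {x} ((G.sphere x).simplices.image (insert x)) := by
  ext s
  simp only [Finset.mem_filter, Finset.mem_insert, Finset.mem_image, mem_simplices,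
    isSimplex_sphere]
  constructor
  · rintro ⟨hs, hxs⟩
    by_cases hsx : s = {x}
    · exact Or.inl hsx
    refine Or.inr ⟨s.erase x, ⟨?_, Finset.notMem_erase x s, ?_⟩, Finset.insert_erase hxs⟩
    · rw [Finset.nonempty_iff_ne_empty, Ne, Finset.erase_eq_empty_iff]
      exact fun h => h.elim (fun h => Finset.notMem_empty x (h ▸ hxs)) hsx
    · rwa [Finset.insert_erase hxs]
  · rintro (rfl | ⟨t, ⟨-, -, ht⟩, rfl⟩)
    · exact ⟨isSimplex_singleton hx, Finset.mem_singleton_self x⟩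
    · exact ⟨ht, Finset.mem_insert_self x t⟩

lemma euler_eq_neg_sum (G : FSGraph V) :
    G.euler = -∑ s ∈ G.simplices, (-1 : ℤ) ^ s.card := by
  rw [euler, ← Finset.sum_neg_distrib]
  refine Finset.sum_congr rfl fun s hs => ?_
  obtain ⟨k, hk⟩ := Nat.exists_eq_add_one_of_ne_zero (mem_simplices.mp hs).1.card_pos.ne'
  rw [hk, Nat.add_sub_cancel, pow_succ]
  ring

theorem euler_eq_euler_remove_add_one_sub_euler_sphere {G : FSGraph V} {x : V}
    (hx : x ∈ G.verts) : G.euler = (G.remove x).euler + 1 - (G.sphere x).euler := by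
  have hxt : ∀ t ∈ (G.sphere x).simplices, t.Nonempty ∧ x ∉ t := fun t ht =>
    (isSimplex_sphere.mp (mem_simplices.mp ht)).imp_right And.left
  have hinj : Set.InjOn (insert x) ((G.sphere x).simplices : Set (Finset V)) :=
    fun s hs t ht hst => by
      rw [← Finset.erase_insert (hxt s hs).2, hst, Finset.erase_insert (hxt t ht).2]
  have hsingleton : {x} ∉ (G.sphere x).simplices.image (insert x) := by
    simp only [Finset.mem_image, not_exists, not_and]
    intro t ht heq
    obtain ⟨a, ha⟩ := (hxt t ht).1
    have hax : a = x := Finset.mem_singleton.mp (heq ▸ Finset.mem_insert_of_mem ha)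
    exact (hxt t ht).2 (hax ▸ ha)
  have hcone : ∀ t ∈ (G.sphere x).simplices, (-1 : ℤ) ^ (insert x t).card = -(-1) ^ t.card :=
    fun t ht => by rw [Finset.card_insert_of_notMem (hxt t ht).2, pow_succ, mul_neg_one]
  rw [euler_eq_neg_sum G, ← Finset.sum_filter_add_sum_filter_not _ (x ∈ ·),
    simplices_filter_mem hx, Finset.sum_insert hsingleton, Finset.sum_image hinj,
    Finset.sum_congr rfl hcone, Finset.sum_neg_distrib, ← simplices_remove,
    euler_eq_neg_sum (G.remove x), euler_eq_neg_sum (G.sphere x)]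
  simp only [Finset.card_singleton, pow_one]
  ring

lemma euler_eq_zero_of_verts_eq_empty {G : FSGraph V} (h : G.verts = ∅) : G.euler = 0 := by
  refine Finset.sum_eq_zero fun s hs => absurd (mem_simplices.mp hs).2.1 ?_
  rw [h, Finset.subset_empty]
  exact (mem_simplices.mp hs).1.ne_empty

lemma euler_eq_one_of_verts_eq_singleton {G : FSGraph V} {x : V} (h : G.verts = {x}) :
    G.euler = 1 := by
  have hremove : (G.remove x).verts = ∅ := by
    ext a
    simp [mem_remove_verts, h]
  have hsphere : (G.sphere x).verts = ∅ := by
    ext a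
    simp only [mem_sphere_verts, h, Finset.mem_singleton, Finset.notMem_empty, iff_false]
    rintro ⟨rfl, haa⟩
    exact G.loopless a haa
  rw [euler_eq_euler_remove_add_one_sub_euler_sphere (h ▸ Finset.mem_singleton_self x),
    euler_eq_zero_of_verts_eq_empty hremove, euler_eq_zero_of_verts_eq_empty hsphere]
  rfl

theorem Contractible.euler_eq_one {G : FSGraph V} (h : Contractible G) : G.euler = 1 := by
  induction h with
  | single G x hG => exact euler_eq_one_of_verts_eq_singleton hG
  | step G x hx _ _ ihS ihR =>
    rw [euler_eq_euler_remove_add_one_sub_euler_sphere hx, ihS, ihR]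
    rfl

end FSGraph

theorem euler_characteristic_of_sphere_general {V : Type} (d : ℤ)
    (G : FSGraph V) (hG : FSGraph.IsSphere d G) :
    (G.euler : ℚ) = 1 + (-1 : ℚ) ^ d := by
  induction hG with
  | empty G hG =>
    rw [FSGraph.euler_eq_zero_of_verts_eq_empty hG]
    norm_num
  | succ d G _ _ _ hpunct ih =>
    obtain ⟨x, hx, hcontr⟩ := hpunct
    rw [FSGraph.euler_eq_euler_remove_add_one_sub_euler_sphere hx, hcontr.euler_eq_one]
    push_cast
    rw [ih x hx, zpow_sub_one₀ (by norm_num : (-1 : ℚ) ≠ 0)]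
    ring

/-- For every integer `d ≥ 0`, the Euler characteristic of every `d`-sphere equals
`1 + (-1)^d`. -/
theorem euler_characteristic_of_sphere {V : Type} (d : ℤ) (hd : 0 ≤ d)
    (G : FSGraph V) (hG : FSGraph.IsSphere d G) :
    (G.euler : ℚ) = 1 + (-1 : ℚ) ^ d :=
  euler_characteristic_of_sphere_general d G hG
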